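/- Let k be a field of characteristic 0 and suppose f = x + Σᵢ f_{dᵢ}, g = y + Σᵢ g_{dᵢ} with f_{dᵢ}, g_{dᵢ} homogeneous of degree dᵢ ≥ 2 for distinct dᵢ satisfying the Sidon property, and J(f,g) ∈ k \ {0}. Then for each i there exist a linear form hᵢ = αᵢx + βᵢy and scalars aᵢ, bᵢ ∈ k such that f_{dᵢ} = aᵢ·hᵢ^{dᵢ} and g_{dᵢ} = bᵢ·hᵢ^{dᵢ}. -/

import Mathlib

/-!
Index the homogeneous pieces of `f` and `g` by `Option (Fin n)`, with `none` standing for the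
linear terms `x` and `y`. The Jacobian `J(f, g)` is then the sum of the `J(f_a, g_b)`, each
homogeneous of degree `d_a + d_b - 2`, and the Sidon property says that the only pairs landing in
degree `2 dᵢ - 2` (resp. `dᵢ - 1`) are `(i, i)` (resp. `(i, none)` and `(none, i)`). As `J(f, g)`
is constant, `J(f_i, g_i) = 0` and `∂ₓ f_i + ∂_y g_i = 0`.

Dehomogenizing at `y = 1` and using Euler's identity, these become `W(P, Q) = 0` and
`P' + d Q - x Q' = 0` for `P = f_i(x, 1)`, `Q = g_i(x, 1)` and the Wronskian `W`. Hence `P = 0` or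
`Q = c P`, so one of `P, Q` solves `L H' = d L' H` for a nonzero linear `L`; comparing with the
solution `L ^ d` through the Wronskian once more gives `H = a L ^ d`.
-/

namespace Polynomial

variable {K : Type*} [Field K] [CharZero K]

theorem exists_eq_C_mul_of_wronskian_eq_zero {P Q : K[X]} (hP : P ≠ 0)
    (hW : wronskian P Q = 0) : ∃ c, Q = C c * P := by
  classical
  obtain ⟨P₁, Q₁, hP₁, hQ₁, hu⟩ := extract_gcd P Q
  have hg : gcd P Q ≠ 0 := gcd_ne_zero_of_left hP
  generalize gcd P Q = g at hP₁ hQ₁ hg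
  subst hP₁ hQ₁
  have hW₁ : wronskian P₁ Q₁ = 0 := by
    have h : wronskian (g * P₁) (g * Q₁) = g ^ 2 * wronskian P₁ Q₁ := by
      simp only [wronskian, derivative_mul]
      ring
    simpa [hW, hg] using h
  obtain ⟨hP₁', hQ₁'⟩ := ((gcd_isUnit_iff _ _).1 hu).wronskian_eq_zero_iff.1 hW₁
  obtain ⟨p, rfl⟩ := natDegree_eq_zero.1 (derivative_eq_zero.1 hP₁')
  obtain ⟨q, rfl⟩ := natDegree_eq_zero.1 (derivative_eq_zero.1 hQ₁')
  have hp : p ≠ 0 := by rintro rfl; simp at hP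
  refine ⟨q / p, ?_⟩
  rw [mul_left_comm, ← C_mul, div_mul_cancel₀ q hp]

theorem exists_eq_C_mul_pow_of_mul_derivative_eq {L H : K[X]} (hL : L ≠ 0) {d : ℕ}
    (hH : L * derivative H = C (d : K) * derivative L * H) : ∃ c, H = C c * L ^ d := by
  have hLd : L * derivative (L ^ d) = C (d : K) * derivative L * L ^ d := by
    rcases d with _ | d
    · simp
    · rw [derivative_pow, Nat.add_sub_cancel, pow_succ]
      ring
  have hW : L * wronskian (L ^ d) H = 0 := by
    rw [wronskian]
    linear_combination L ^ d * hH - H * hLd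
  exact exists_eq_C_mul_of_wronskian_eq_zero (pow_ne_zero d hL)
    ((mul_eq_zero.1 hW).resolve_left hL)

theorem exists_eq_C_mul_linear_pow_of_wronskian_eq_zero {d : ℕ} {P Q : K[X]}
    (hW : wronskian P Q = 0) (hdiv : derivative P + (C (d : K) * Q - X * derivative Q) = 0) :
    ∃ α β a b : K, P = C a * (C α * X + C β) ^ d ∧ Q = C b * (C α * X + C β) ^ d := by
  by_cases hP : P = 0
  · subst hP
    rw [derivative_zero, zero_add] at hdiv
    obtain ⟨b, rfl⟩ := exists_eq_C_mul_pow_of_mul_derivative_eq X_ne_zero (H := Q) (d := d)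
      (by rw [derivative_X]; linear_combination -hdiv)
    exact ⟨1, 0, 0, b, by simp, by simp⟩
  · obtain ⟨c, rfl⟩ := exists_eq_C_mul_of_wronskian_eq_zero hP hW
    have hL : C c * X - 1 ≠ 0 := fun h ↦ by simpa using congrArg (coeff · 0) h
    obtain ⟨a, rfl⟩ := exists_eq_C_mul_pow_of_mul_derivative_eq hL (H := P) (d := d) (by
      simp only [derivative_C_mul, derivative_sub, derivative_X, derivative_one] at hdiv ⊢
      linear_combination -hdiv)
    refine ⟨c, -1, a, c * a, by simp [sub_eq_add_neg], ?_⟩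
    rw [C_mul, mul_assoc]
    simp [sub_eq_add_neg]

end Polynomial

namespace MvPolynomial

lemma homogeneousComponent_sum_of_isHomogeneous {σ ι R : Type*} [CommSemiring R]
    (s : Finset ι) {p : ι → MvPolynomial σ R} {e : ι → ℕ}
    (hp : ∀ i ∈ s, (p i).IsHomogeneous (e i)) (N : ℕ) :
    homogeneousComponent N (∑ i ∈ s, p i) = ∑ i ∈ s with e i = N, p i := by
  rw [map_sum, Finset.sum_filter]
  refine Finset.sum_congr rfl fun i hi ↦ ?_
  rw [homogeneousComponent_of_mem ((mem_homogeneousSubmodule _ _).2 (hp i hi))]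
  exact if_congr eq_comm rfl rfl

variable {R : Type*} [CommRing R]

section Dehomogenize

noncomputable def dehomogenize : MvPolynomial (Fin 2) R →ₐ[R] Polynomial R :=
  aeval ![Polynomial.X, 1]

@[simp] lemma dehomogenize_X_zero :
    dehomogenize (X 0 : MvPolynomial (Fin 2) R) = Polynomial.X :=
  aeval_X _ _

@[simp] lemma dehomogenize_X_one : dehomogenize (X 1 : MvPolynomial (Fin 2) R) = 1 :=
  aeval_X _ _

lemma dehomogenize_pderiv_zero (F : MvPolynomial (Fin 2) R) :
    dehomogenize (pderiv 0 F) = Polynomial.derivative (dehomogenize F) := by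
  induction F using MvPolynomial.induction_on with
  | C a => simp
  | add p q hp hq => simp only [map_add, hp, hq]
  | mul_X p i hp => fin_cases i <;> simp [hp, Polynomial.derivative_mul, mul_comm]

lemma IsHomogeneous.dehomogenize_pderiv_one {F : MvPolynomial (Fin 2) R} {n : ℕ}
    (hF : F.IsHomogeneous n) :
    dehomogenize (pderiv 1 F) = Polynomial.C (n : R) * dehomogenize F
      - Polynomial.X * Polynomial.derivative (dehomogenize F) := by
  have h := congrArg dehomogenize hF.sum_X_mul_pderiv
  simp only [Fin.sum_univ_two, map_add, map_mul, dehomogenize_X_zero, dehomogenize_X_one,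
    dehomogenize_pderiv_zero, nsmul_eq_mul, one_mul, map_natCast] at h
  rw [map_natCast]
  linear_combination h

lemma IsHomogeneous.eq_of_dehomogenize_eq {F G : MvPolynomial (Fin 2) R} {n : ℕ}
    (hF : F.IsHomogeneous n) (hG : G.IsHomogeneous n) (h : dehomogenize F = dehomogenize G) :
    F = G := by
  rw [← Polynomial.homogenize_eq_of_isHomogeneous hF rfl,
    ← Polynomial.homogenize_eq_of_isHomogeneous hG h.symm]
  rfl

end Dehomogenize

section Jacobian

noncomputable def jacobian (F G : MvPolynomial (Fin 2) R) : MvPolynomial (Fin 2) R :=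
  pderiv 0 F * pderiv 1 G - pderiv 1 F * pderiv 0 G

lemma jacobian_sum {ι : Type*} (s t : Finset ι) (F G : ι → MvPolynomial (Fin 2) R) :
    jacobian (∑ i ∈ s, F i) (∑ j ∈ t, G j) = ∑ i ∈ s, ∑ j ∈ t, jacobian (F i) (G j) := by
  simp only [jacobian, map_sum, Finset.sum_mul_sum, ← Finset.sum_sub_distrib]

@[simp] lemma jacobian_X_one (F : MvPolynomial (Fin 2) R) : jacobian F (X 1) = pderiv 0 F := by
  simp [jacobian]

@[simp] lemma jacobian_X_zero_left (G : MvPolynomial (Fin 2) R) :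
    jacobian (X 0) G = pderiv 1 G := by
  simp [jacobian]

lemma IsHomogeneous.jacobian {F G : MvPolynomial (Fin 2) R} {a b : ℕ} (hF : F.IsHomogeneous a)
    (hG : G.IsHomogeneous b) : (jacobian F G).IsHomogeneous (a - 1 + (b - 1)) :=
  (hF.pderiv.mul hG.pderiv).sub (hF.pderiv.mul hG.pderiv)

theorem sum_jacobian_pair_eq_zero_of_jacobian_sum_eq_C {ι : Type*} [Fintype ι] [DecidableEq ι]
    {D : ι → ℕ} (hD : ∀ i, D i ≠ 0)
    (hSidon : ∀ a b p q, D a + D b = D p + D q → a = p ∧ b = q ∨ a = q ∧ b = p)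
    {F G : ι → MvPolynomial (Fin 2) R} (hF : ∀ i, (F i).IsHomogeneous (D i))
    (hG : ∀ i, (G i).IsHomogeneous (D i)) {c : R} (hJ : jacobian (∑ i, F i) (∑ i, G i) = C c)
    {i j : ι} (hij : 2 < D i + D j) :
    ∑ p ∈ {(i, j), (j, i)}, jacobian (F p.1) (G p.2) = 0 := by
  have h := congrArg (homogeneousComponent (D i - 1 + (D j - 1))) hJ
  rw [jacobian_sum, ← Fintype.sum_prod_type',
    homogeneousComponent_sum_of_isHomogeneous _ (fun p _ ↦ (hF p.1).jacobian (hG p.2)),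
    homogeneousComponent_of_mem ((mem_homogeneousSubmodule _ _).2 (isHomogeneous_C _ c)),
    if_neg (by omega)] at h
  convert h using 2
  ext ⟨a, b⟩
  have := hD a; have := hD b; have := hD i; have := hD j
  simp only [Finset.mem_insert, Finset.mem_singleton, Prod.mk.injEq, Finset.mem_filter,
    Finset.mem_univ, true_and]
  constructor
  · rintro (⟨rfl, rfl⟩ | ⟨rfl, rfl⟩) <;> omega
  · intro hab
    exact hSidon a b i j (by omega)

end Jacobian

theorem exists_eq_C_mul_linear_pow_of_jacobian_eq_zero {K : Type*} [Field K] [CharZero K]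
    {d : ℕ} (hd : d ≠ 0) {F G : MvPolynomial (Fin 2) K} (hF : F.IsHomogeneous d)
    (hG : G.IsHomogeneous d) (hdiv : pderiv 0 F + pderiv 1 G = 0) (hjac : jacobian F G = 0) :
    ∃ α β a b : K,
      F = C a * (C α * X 0 + C β * X 1) ^ d ∧ G = C b * (C α * X 0 + C β * X 1) ^ d := by
  have hdiv' := congrArg dehomogenize hdiv
  rw [map_add, map_zero, dehomogenize_pderiv_zero, hG.dehomogenize_pderiv_one] at hdiv'
  have hW : (dehomogenize F).wronskian (dehomogenize G) = 0 := by
    have h := congrArg dehomogenize hjac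
    rw [jacobian, map_sub, map_mul, map_mul, map_zero, dehomogenize_pderiv_zero,
      dehomogenize_pderiv_zero, hF.dehomogenize_pderiv_one, hG.dehomogenize_pderiv_one] at h
    have h' : Polynomial.C (d : K) * (dehomogenize F).wronskian (dehomogenize G) = 0 := by
      rw [Polynomial.wronskian]
      linear_combination -h
    simpa [hd] using h'
  obtain ⟨α, β, a, b, hFa, hGb⟩ :=
    Polynomial.exists_eq_C_mul_linear_pow_of_wronskian_eq_zero hW hdiv'
  have hlin (c : K) :
      (C c * (C α * X 0 + C β * X 1) ^ d : MvPolynomial (Fin 2) K).IsHomogeneous d := by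
    simpa using (((isHomogeneous_C_mul_X α 0).add (isHomogeneous_C_mul_X β 1)).pow d).C_mul c
  refine ⟨α, β, a, b, hF.eq_of_dehomogenize_eq (hlin a) ?_,
    hG.eq_of_dehomogenize_eq (hlin b) ?_⟩
  · simp [hFa]
  · simp [hGb]

end MvPolynomial

open MvPolynomial

theorem components_are_powers_of_linear_forms {k : Type*} [Field k] [CharZero k]
    (n : ℕ) (d : Fin n → ℕ) (hd : ∀ i, 2 ≤ d i)
    (hinj : Function.Injective d)
    (hSidon : ∀ a ∈ insert 1 (Finset.image d Finset.univ),
      ∀ b ∈ insert 1 (Finset.image d Finset.univ),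
      ∀ p ∈ insert 1 (Finset.image d Finset.univ),
      ∀ q ∈ insert 1 (Finset.image d Finset.univ),
        a + b = p + q → (a = p ∧ b = q) ∨ (a = q ∧ b = p))
    (fc gc : Fin n → MvPolynomial (Fin 2) k)
    (hf : ∀ i, (fc i).IsHomogeneous (d i))
    (hg : ∀ i, (gc i).IsHomogeneous (d i))
    (f g : MvPolynomial (Fin 2) k)
    (hfs : f = X 0 + ∑ i, fc i) (hgs : g = X 1 + ∑ i, gc i)
    (hJ : ∃ c : k, c ≠ 0 ∧
      pderiv 0 f * pderiv 1 g - pderiv 1 f * pderiv 0 g = C c) :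
    ∀ i, ∃ α β a b : k,
      fc i = C a * (C α * X 0 + C β * X 1) ^ (d i)
      ∧ gc i = C b * (C α * X 0 + C β * X 1) ^ (d i) := by
  intro i
  obtain ⟨c, -, hJ⟩ := hJ
  let D : Option (Fin n) → ℕ := (Option.elim · 1 d)
  let F : Option (Fin n) → MvPolynomial (Fin 2) k := (Option.elim · (X 0) fc)
  let G : Option (Fin n) → MvPolynomial (Fin 2) k := (Option.elim · (X 1) gc)
  have hD (o : Option (Fin n)) : D o ≠ 0 := by
    cases o
    exacts [one_ne_zero, (two_pos.trans_le (hd _)).ne']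
  have hDinj : Function.Injective D := by
    rintro (_ | a) (_ | b) h
    · rfl
    · have := hd b; change 1 = d b at h; omega
    · have := hd a; change d a = 1 at h; omega
    · exact congrArg some (hinj h)
  have hDmem (o : Option (Fin n)) : D o ∈ insert 1 (Finset.image d Finset.univ) := by
    cases o <;> simp [D]
  have hDSidon (a b p q : Option (Fin n)) (h : D a + D b = D p + D q) :
      a = p ∧ b = q ∨ a = q ∧ b = p := by
    simpa only [hDinj.eq_iff] using hSidon _ (hDmem a) _ (hDmem b) _ (hDmem p) _ (hDmem q) h
  have hF (o : Option (Fin n)) : (F o).IsHomogeneous (D o) := by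
    cases o
    exacts [isHomogeneous_X _ _, hf _]
  have hG (o : Option (Fin n)) : (G o).IsHomogeneous (D o) := by
    cases o
    exacts [isHomogeneous_X _ _, hg _]
  have hJ' : jacobian (∑ o, F o) (∑ o, G o) = C c := by
    rw [Fintype.sum_option, Fintype.sum_option]
    exact hfs ▸ hgs ▸ hJ
  have hdiv := sum_jacobian_pair_eq_zero_of_jacobian_sum_eq_C hD hDSidon hF hG hJ'
    (i := some i) (j := none) (show 2 < d i + 1 by linarith [hd i])
  have hjac := sum_jacobian_pair_eq_zero_of_jacobian_sum_eq_C hD hDSidon hF hG hJ'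
    (i := some i) (j := some i) (show 2 < d i + d i by linarith [hd i])
  rw [Finset.sum_pair (by simp)] at hdiv
  rw [Finset.pair_eq_singleton, Finset.sum_singleton] at hjac
  simp only [Option.elim_some, Option.elim_none, jacobian_X_one, jacobian_X_zero_left, F, G]
    at hdiv hjac
  exact exists_eq_C_mul_linear_pow_of_jacobian_eq_zero (hD (some i)) (hf i) (hg i) hdiv hjac
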